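/- Let X be a Banach space and C > 0. If for all N ≥ 1 and all x_0,…,x_{p^{2N}−1} ∈ X the lower bound C^{−1} Σ_k ‖x_k‖² ≤ ∫_{ℤ_p} ‖Σ_k χ_p(kt/p^{2N}) x_k‖² dt holds, then there is C' > 0 such that for all N and all x_k ∈ X the upper bound ∫_{ℤ_p} ‖Σ_k χ_p(kt/p^{2N}) x_k‖² dt ≤ C' Σ_k ‖x_k‖² also holds. -/

import Mathlib

open MeasureTheory Metric Finset
open scoped ENNReal NNReal Classical

noncomputable def padicDigit {p : ℕ} [Fact p.Prime] (x : ℤ_[p]) (k : ℕ) : ℕ :=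
  x.appr (k+1) / p^k

noncomputable def padicTau {p : ℕ} [Fact p.Prime] (x : ℤ_[p]) : ℝ :=
  ∑' k : ℕ, (padicDigit x k : ℝ) / (p:ℝ)^(k+1)

noncomputable def padicFrac {p : ℕ} [Fact p.Prime] (x : ℚ_[p]) : ℚ :=
  if h : ‖x * (p:ℚ_[p])^((-x.valuation).toNat)‖ ≤ 1 then
    ((PadicInt.appr (⟨x * (p:ℚ_[p])^((-x.valuation).toNat), h⟩ : ℤ_[p]) ((-x.valuation).toNat) : ℚ)
      / (p:ℚ)^((-x.valuation).toNat))
  else 0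

noncomputable def padicChar {p : ℕ} [Fact p.Prime] (x : ℚ_[p]) : ℂ :=
  Complex.exp (2 * Real.pi * Complex.I * ((padicFrac x : ℚ) : ℂ))

def IsHilbertizable (X : Type*) [NormedAddCommGroup X] [NormedSpace ℂ X] : Prop :=
  ∃ (H : Type) (_ : NormedAddCommGroup H) (_ : InnerProductSpace ℂ H) (_ : CompleteSpace H),
    Nonempty (X ≃L[ℂ] H)

noncomputable def rademacherZp {p : ℕ} [Fact p.Prime] (i : ℕ) (t : ℤ_[p]) : ℝ :=
  Real.sign (Real.sin (2^i * Real.pi * padicTau t))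

noncomputable def padicFourier {p : ℕ} [Fact p.Prime] [MeasurableSpace ℚ_[p]]
    (μ : Measure ℚ_[p]) {X : Type*} [NormedAddCommGroup X] [NormedSpace ℂ X]
    (f : ℚ_[p] → X) : ℚ_[p] → X :=
  fun s => ∫ t, padicChar (s * t) • f t ∂μ

/-!
Write `y = F x` for the finite Fourier transform `y_a = ∑_k χ_p(k a / p^m) x_k` (here `m = 2N`).
The integrand depends on `t` only through `t mod p^m`, so the integral is `p^{-m} ∑_a ‖y_a‖²`.
By orthogonality of the characters, `F (F x)` is `p^m` times `x` with its indices reflected,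
`b ↦ -b mod p^m`. The lower bound applied to `y` therefore reads `∑_a ‖y_a‖² ≤ C p^m ∑_k ‖x_k‖²`,
which is the upper bound with `C' = C`.

That `χ_p` is a character, trivial exactly on `ℤ_p`, rests on one fact: two rationals with
`p`-power denominators that agree modulo `ℤ_p` differ by an integer.
-/

lemma Nat.dvd_add_iff_eq_ite {n b k : ℕ} (hb : b < n) (hk : k < n) :
    n ∣ b + k ↔ k = if b = 0 then 0 else n - b := by
  constructor
  · rintro ⟨c, hc⟩
    have hc2 : c < 2 := by nlinarith
    interval_cases c <;> split_ifs <;> omega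
  · intro hk
    split_ifs at hk with h
    · simp [h, hk]
    · exact ⟨1, by omega⟩

lemma Finset.sum_range_comp_ite_sub {M : Type*} [AddCommMonoid M] (n : ℕ) (f : ℕ → M) :
    ∑ b ∈ range n, f (if b = 0 then 0 else n - b) = ∑ b ∈ range n, f b := by
  refine sum_nbij' (fun b => if b = 0 then 0 else n - b) (fun b => if b = 0 then 0 else n - b)
    ?_ ?_ ?_ ?_ fun _ _ => rfl <;> intro b hb <;> simp only [mem_range] at hb ⊢ <;>
    split_ifs <;> omega

section

variable {p : ℕ} [Fact p.Prime]

lemma Padic.norm_mul_pow_toNat_neg_valuation_le_one (x : ℚ_[p]) :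
    ‖x * (p : ℚ_[p]) ^ (-x.valuation).toNat‖ ≤ 1 := by
  rcases eq_or_ne x 0 with rfl | hx
  · simp
  rw [norm_mul, Padic.norm_eq_zpow_neg_valuation hx, Padic.norm_p_pow,
    ← zpow_add₀ (by simp [(Fact.out : p.Prime).ne_zero])]
  exact zpow_le_one_of_nonpos₀ (by exact_mod_cast (Fact.out : p.Prime).one_le) (by omega)

lemma padicFrac_eq (x : ℚ_[p]) :
    padicFrac x = (PadicInt.appr ⟨_, Padic.norm_mul_pow_toNat_neg_valuation_le_one x⟩
      (-x.valuation).toNat : ℚ) / (p : ℚ) ^ (-x.valuation).toNat :=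
  dif_pos _

lemma exists_padicFrac_mul_pow_eq_intCast (x : ℚ_[p]) :
    ∃ (m : ℕ) (a : ℤ), padicFrac x * (p : ℚ) ^ m = a := by
  rw [padicFrac_eq]
  refine ⟨_, _, (div_mul_cancel₀ _ (pow_ne_zero _ ?_)).trans (Int.cast_natCast _).symm⟩
  exact_mod_cast (Fact.out : p.Prime).ne_zero

lemma Padic.norm_sub_appr_div_pow_le_one {x : ℚ_[p]} {m : ℕ}
    (h : ‖x * (p : ℚ_[p]) ^ m‖ ≤ 1) :
    ‖x - (PadicInt.appr ⟨_, h⟩ m : ℚ_[p]) / (p : ℚ_[p]) ^ m‖ ≤ 1 := by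
  set y : ℤ_[p] := ⟨_, h⟩
  have hp : (p : ℚ_[p]) ^ m ≠ 0 := by simp [(Fact.out : p.Prime).ne_zero]
  have hsub : x - (y.appr m : ℚ_[p]) / (p : ℚ_[p]) ^ m =
      (y - y.appr m : ℤ_[p]) / (p : ℚ_[p]) ^ m := by
    rw [PadicInt.coe_sub, PadicInt.coe_natCast, eq_div_iff hp, sub_mul, div_mul_cancel₀ _ hp]
  rw [hsub, norm_div, Padic.norm_p_pow, PadicInt.padic_norm_e_of_padicInt,
    div_le_one (zpow_pos (by exact_mod_cast (Fact.out : p.Prime).pos) _)]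
  exact (PadicInt.norm_le_pow_iff_mem_span_pow _ m).mpr (PadicInt.appr_spec m y)

lemma norm_sub_padicFrac_le_one (x : ℚ_[p]) : ‖x - (padicFrac x : ℚ_[p])‖ ≤ 1 := by
  rw [padicFrac_eq]
  push_cast
  exact Padic.norm_sub_appr_div_pow_le_one _

lemma Padic.exists_eq_intCast_of_mul_pow_eq_intCast_of_norm_le_one {q : ℚ} {m : ℕ} {a : ℤ}
    (hq : q * (p : ℚ) ^ m = a) (hn : ‖(q : ℚ_[p])‖ ≤ 1) : ∃ b : ℤ, q = b := by
  have ha : ‖(a : ℚ_[p])‖ ≤ (p : ℝ) ^ (-m : ℤ) := by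
    rw [← Rat.cast_intCast, ← hq, Rat.cast_mul, norm_mul, Rat.cast_pow, Rat.cast_natCast,
      Padic.norm_p_pow]
    exact mul_le_of_le_one_left (by positivity) hn
  obtain ⟨b, rfl⟩ := (Padic.norm_int_le_pow_iff_dvd a m).mp ha
  refine ⟨b, mul_right_cancel₀ (pow_ne_zero m ?_) (hq.trans ?_)⟩
  · exact_mod_cast (Fact.out : p.Prime).ne_zero
  · push_cast; ring

lemma padicChar_eq_exp_of_norm_sub_le_one {x : ℚ_[p]} {q : ℚ} {m : ℕ} {a : ℤ}
    (hq : q * (p : ℚ) ^ m = a) (hx : ‖x - (q : ℚ_[p])‖ ≤ 1) :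
    padicChar x = Complex.exp (2 * Real.pi * Complex.I * (q : ℂ)) := by
  obtain ⟨m', a', hfrac⟩ := exists_padicFrac_mul_pow_eq_intCast x
  obtain ⟨b, hb⟩ : ∃ b : ℤ, padicFrac x - q = b := by
    refine Padic.exists_eq_intCast_of_mul_pow_eq_intCast_of_norm_le_one (p := p)
      (m := m' + m) (a := a' * p ^ m - a * p ^ m') ?_ ?_
    · push_cast
      linear_combination (p : ℚ) ^ m * hfrac - (p : ℚ) ^ m' * hq
    · have hdiff : ((padicFrac x - q : ℚ) : ℚ_[p]) = (x - q) - (x - padicFrac x) := by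
        push_cast; ring
      rw [hdiff, sub_eq_add_neg]
      exact (IsUltrametricDist.norm_add_le_max _ _).trans
        (max_le hx ((norm_neg _).trans_le (norm_sub_padicFrac_le_one x)))
  rw [padicChar, Complex.exp_eq_exp_iff_exists_int]
  exact ⟨b, by rw [eq_add_of_sub_eq' hb]; push_cast; ring⟩

lemma padicChar_add (u v : ℚ_[p]) : padicChar (u + v) = padicChar u * padicChar v := by
  obtain ⟨m, a, hu⟩ := exists_padicFrac_mul_pow_eq_intCast u
  obtain ⟨m', a', hv⟩ := exists_padicFrac_mul_pow_eq_intCast v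
  rw [padicChar_eq_exp_of_norm_sub_le_one (q := padicFrac u + padicFrac v) (m := m + m')
    (a := a * p ^ m' + a' * p ^ m), padicChar, padicChar, ← Complex.exp_add]
  · push_cast; ring_nf
  · push_cast
    linear_combination (p : ℚ) ^ m' * hu + (p : ℚ) ^ m * hv
  · have hsum : u + v - ((padicFrac u + padicFrac v : ℚ) : ℚ_[p]) =
        (u - padicFrac u) + (v - padicFrac v) := by push_cast; ring
    rw [hsum]
    exact (IsUltrametricDist.norm_add_le_max _ _).trans
      (max_le (norm_sub_padicFrac_le_one u) (norm_sub_padicFrac_le_one v))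

lemma padicChar_eq_one_iff {x : ℚ_[p]} : padicChar x = 1 ↔ ‖x‖ ≤ 1 := by
  constructor
  · rw [padicChar, Complex.exp_eq_one_iff]
    rintro ⟨n, hn⟩
    have hfrac : padicFrac x = n := by
      have h2pi : (2 * Real.pi * Complex.I : ℂ) ≠ 0 := by simp [Real.pi_ne_zero]
      exact_mod_cast mul_left_cancel₀ h2pi (hn.trans (mul_comm _ _))
    have hx := norm_sub_padicFrac_le_one x
    rw [hfrac, Rat.cast_intCast] at hx
    simpa using (IsUltrametricDist.norm_add_le_max (x - n) n).trans
      (max_le hx (Padic.norm_int_le_one n))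
  · intro hx
    rw [padicChar_eq_exp_of_norm_sub_le_one (q := 0) (m := 0) (a := 0) (by simp) (by simpa)]
    simp

lemma padicChar_natCast_mul (a : ℕ) (z : ℚ_[p]) :
    padicChar ((a : ℚ_[p]) * z) = padicChar z ^ a := by
  induction a with
  | zero => simpa using padicChar_eq_one_iff.mpr (by simp)
  | succ a ih => rw [Nat.cast_succ, add_one_mul, padicChar_add, ih, pow_succ]

lemma Padic.norm_natCast_div_pow_le_one_iff {j m : ℕ} :
    ‖(j : ℚ_[p]) / (p : ℚ_[p]) ^ m‖ ≤ 1 ↔ p ^ m ∣ j := by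
  rw [norm_div, Padic.norm_p_pow,
    div_le_one (zpow_pos (by exact_mod_cast (Fact.out : p.Prime).pos) _), ← Int.cast_natCast,
    Padic.norm_int_le_pow_iff_dvd]
  exact_mod_cast Iff.rfl

lemma sum_range_padicChar_natCast_mul_div_pow (m j : ℕ) :
    ∑ a ∈ range (p ^ m), padicChar ((a : ℚ_[p]) * (j : ℚ_[p]) / (p : ℚ_[p]) ^ m) =
      if p ^ m ∣ j then ((p ^ m : ℕ) : ℂ) else 0 := by
  simp_rw [mul_div_assoc, padicChar_natCast_mul]
  split_ifs with hj
  · simp [padicChar_eq_one_iff.mpr (Padic.norm_natCast_div_pow_le_one_iff.mpr hj)]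
  · have hp : (p : ℚ_[p]) ^ m ≠ 0 := by simp [(Fact.out : p.Prime).ne_zero]
    have hz : padicChar ((j : ℚ_[p]) / (p : ℚ_[p]) ^ m) ≠ 1 :=
      mt padicChar_eq_one_iff.mp (mt Padic.norm_natCast_div_pow_le_one_iff.mp hj)
    rw [geom_sum_eq hz, ← padicChar_natCast_mul, Nat.cast_pow, mul_div_cancel₀ _ hp,
      padicChar_eq_one_iff.mpr (by simpa using Padic.norm_int_le_one (p := p) j), sub_self,
      zero_div]

lemma PadicInt.setOf_appr_eq {n a : ℕ} (ha : a < p ^ n) :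
    {t : ℤ_[p] | t.appr n = a} = closedBall (a : ℤ_[p]) ((p : ℝ) ^ (-n : ℤ)) := by
  have mem_ball_appr (t : ℤ_[p]) :
      t ∈ closedBall (t.appr n : ℤ_[p]) ((p : ℝ) ^ (-n : ℤ)) := by
    rw [mem_closedBall, dist_eq_norm]
    exact (PadicInt.norm_le_pow_iff_mem_span_pow _ n).mpr (PadicInt.appr_spec n t)
  ext t
  refine ⟨fun h => h ▸ mem_ball_appr t, fun h => ?_⟩
  have hdist : ‖((t.appr n - a : ℤ) : ℤ_[p])‖ ≤ (p : ℝ) ^ (-n : ℤ) := by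
    push_cast
    rw [← dist_eq_norm]
    exact (IsUltrametricDist.dist_triangle_max _ t _).trans
      (max_le (by rw [dist_comm]; exact mem_ball_appr t) h)
  have hmod : a ≡ t.appr n [MOD p ^ n] := by
    rw [Nat.modEq_iff_dvd]
    exact_mod_cast PadicInt.norm_int_le_pow_iff_dvd.mp hdist
  exact (hmod.eq_of_lt_of_lt ha (PadicInt.appr_lt t n)).symm

variable {X : Type*} [NormedAddCommGroup X] [NormedSpace ℂ X]

noncomputable def padicDFT (m : ℕ) (x : ℕ → X) (s : ℚ_[p]) : X :=
  ∑ k ∈ range (p ^ m), padicChar ((k : ℚ_[p]) * s / (p : ℚ_[p]) ^ m) • x k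

lemma padicDFT_appr (m : ℕ) (x : ℕ → X) (t : ℤ_[p]) :
    padicDFT m x (t : ℚ_[p]) = padicDFT m x ((t.appr m : ℕ) : ℚ_[p]) := by
  refine sum_congr rfl fun k _ => ?_
  obtain ⟨w, hw⟩ := Ideal.mem_span_singleton'.mp (PadicInt.appr_spec m t)
  have hp : (p : ℚ_[p]) ^ m ≠ 0 := by simp [(Fact.out : p.Prime).ne_zero]
  have hsplit : (k : ℚ_[p]) * t / (p : ℚ_[p]) ^ m =
      (k : ℚ_[p]) * (t.appr m : ℕ) / (p : ℚ_[p]) ^ m + ((k * w : ℤ_[p]) : ℚ_[p]) := by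
    have ht : (t : ℚ_[p]) = (t.appr m : ℕ) + w * (p : ℚ_[p]) ^ m := by
      have hw' := congrArg ((↑) : ℤ_[p] → ℚ_[p]) hw
      push_cast at hw'
      linear_combination -hw'
    rw [ht]
    push_cast
    field_simp
  rw [hsplit, padicChar_add, padicChar_eq_one_iff.mpr (PadicInt.norm_le_one _), mul_one]

lemma padicDFT_padicDFT (m : ℕ) (x : ℕ → X) {b : ℕ} (hb : b < p ^ m) :
    padicDFT m (fun a : ℕ => padicDFT m x (a : ℚ_[p])) (b : ℚ_[p]) =
      ((p ^ m : ℕ) : ℂ) • x (if b = 0 then 0 else p ^ m - b) := by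
  have horth (k : ℕ) :
      ∑ a ∈ range (p ^ m), padicChar ((a : ℚ_[p]) * (b : ℚ_[p]) / (p : ℚ_[p]) ^ m) *
        padicChar ((k : ℚ_[p]) * (a : ℚ_[p]) / (p : ℚ_[p]) ^ m) =
        if p ^ m ∣ b + k then ((p ^ m : ℕ) : ℂ) else 0 := by
    rw [← sum_range_padicChar_natCast_mul_div_pow]
    refine sum_congr rfl fun a _ => ?_
    rw [← padicChar_add]
    push_cast
    ring_nf
  simp only [padicDFT, smul_sum, smul_smul]
  rw [sum_comm]
  simp only [← sum_smul, horth, ite_smul, zero_smul]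
  rw [sum_congr rfl fun k hk => if_congr (Nat.dvd_add_iff_eq_ite hb (mem_range.mp hk)) rfl rfl,
    sum_ite_eq', if_pos (mem_range.mpr (by split_ifs <;> omega))]

lemma sum_norm_sq_padicDFT_padicDFT (m : ℕ) (x : ℕ → X) :
    ∑ b ∈ range (p ^ m),
        ‖padicDFT m (fun a : ℕ => padicDFT m x (a : ℚ_[p])) (b : ℚ_[p])‖ ^ 2 =
      ((p : ℝ) ^ m) ^ 2 * ∑ k ∈ range (p ^ m), ‖x k‖ ^ 2 := by
  rw [mul_sum,
    ← Finset.sum_range_comp_ite_sub (p ^ m) fun k => ((p : ℝ) ^ m) ^ 2 * ‖x k‖ ^ 2]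
  refine sum_congr rfl fun b hb => ?_
  rw [padicDFT_padicDFT m x (mem_range.mp hb), norm_smul, mul_pow]
  simp

section Haar

variable [MeasurableSpace ℤ_[p]] [OpensMeasurableSpace ℤ_[p]] (μ : Measure ℤ_[p])
  [IsProbabilityMeasure μ] [μ.IsAddLeftInvariant]

lemma PadicInt.measurableSet_setOf_appr_eq (n a : ℕ) :
    MeasurableSet {t : ℤ_[p] | t.appr n = a} := by
  rcases lt_or_ge a (p ^ n) with ha | ha
  · rw [PadicInt.setOf_appr_eq ha]
    exact measurableSet_closedBall
  · convert MeasurableSet.empty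
    exact Set.eq_empty_of_forall_notMem fun t ht => (PadicInt.appr_lt t n).not_ge (ht ▸ ha)

lemma PadicInt.measure_setOf_appr_eq {n a : ℕ} (ha : a < p ^ n) :
    μ {t | t.appr n = a} = ((p : ℝ≥0∞) ^ n)⁻¹ := by
  have hball {b : ℕ} (hb : b < p ^ n) :
      μ {t | t.appr n = b} = μ (closedBall 0 ((p : ℝ) ^ (-n : ℤ))) := by
    rw [PadicInt.setOf_appr_eq hb, ← add_zero (b : ℤ_[p]), ← vadd_eq_add, ← vadd_closedBall,
      measure_vadd]
  have hsum : ∑ b ∈ range (p ^ n), μ {t | t.appr n = b} = 1 := by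
    refine (sum_measure_preimage_singleton (range (p ^ n)) (f := fun t : ℤ_[p] => t.appr n)
      fun b _ => PadicInt.measurableSet_setOf_appr_eq n b).trans ?_
    rw [← measure_univ (μ := μ)]
    congr
    exact Set.eq_univ_of_forall fun t => by simpa using PadicInt.appr_lt t n
  rw [sum_congr rfl fun b hb => hball (mem_range.mp hb), sum_const, card_range, nsmul_eq_mul,
    mul_comm, Nat.cast_pow] at hsum
  exact (hball ha).trans (ENNReal.eq_inv_of_mul_eq_one_left hsum)

lemma PadicInt.integral_comp_appr {E : Type*} [NormedAddCommGroup E] [NormedSpace ℝ E]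
    [CompleteSpace E] (n : ℕ) (F : ℕ → E) :
    ∫ t, F (t.appr n) ∂μ = ((p : ℝ) ^ n)⁻¹ • ∑ a ∈ range (p ^ n), F a := by
  have hF : (fun t : ℤ_[p] => F (t.appr n)) = fun t =>
      ∑ a ∈ range (p ^ n), {t : ℤ_[p] | t.appr n = a}.indicator (fun _ => F a) t := by
    funext t
    simp [Set.indicator_apply, PadicInt.appr_lt]
  rw [hF, integral_finsetSum _ fun a _ =>
    (integrable_const (F a)).indicator (PadicInt.measurableSet_setOf_appr_eq n a), smul_sum]
  refine sum_congr rfl fun a ha => ?_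
  rw [integral_indicator_const _ (PadicInt.measurableSet_setOf_appr_eq n a), measureReal_def,
    PadicInt.measure_setOf_appr_eq μ (mem_range.mp ha)]
  simp

lemma integral_norm_sq_padicDFT (m : ℕ) (x : ℕ → X) :
    ∫ t, ‖padicDFT m x (t : ℚ_[p])‖ ^ 2 ∂μ =
      ((p : ℝ) ^ m)⁻¹ * ∑ a ∈ range (p ^ m), ‖padicDFT m x (a : ℚ_[p])‖ ^ 2 := by
  simp_rw [padicDFT_appr m x]
  exact PadicInt.integral_comp_appr μ m fun a => ‖padicDFT m x (a : ℚ_[p])‖ ^ 2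

theorem integral_norm_sq_padicDFT_le_of_le_integral {C : ℝ} (hC : 0 < C) (m : ℕ)
    (hlow : ∀ y : ℕ → X, C⁻¹ * ∑ k ∈ range (p ^ m), ‖y k‖ ^ 2 ≤
      ∫ t, ‖padicDFT m y (t : ℚ_[p])‖ ^ 2 ∂μ) (x : ℕ → X) :
    ∫ t, ‖padicDFT m x (t : ℚ_[p])‖ ^ 2 ∂μ ≤ C * ∑ k ∈ range (p ^ m), ‖x k‖ ^ 2 := by
  have hP : (0 : ℝ) < (p : ℝ) ^ m := by
    have := (Fact.out : p.Prime).pos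
    positivity
  set S := ∑ k ∈ range (p ^ m), ‖x k‖ ^ 2
  set T := ∑ a ∈ range (p ^ m), ‖padicDFT m x (a : ℚ_[p])‖ ^ 2
  have hT : C⁻¹ * T ≤ (p : ℝ) ^ m * S := by
    have h := hlow fun a => padicDFT m x (a : ℚ_[p])
    rwa [integral_norm_sq_padicDFT, sum_norm_sq_padicDFT_padicDFT, ← mul_assoc, sq,
      inv_mul_cancel_left₀ hP.ne'] at h
  rw [integral_norm_sq_padicDFT]
  calc ((p : ℝ) ^ m)⁻¹ * T = ((p : ℝ) ^ m)⁻¹ * C * (C⁻¹ * T) := by field_simp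
    _ ≤ ((p : ℝ) ^ m)⁻¹ * C * ((p : ℝ) ^ m * S) := by gcongr
    _ = C * S := by field_simp

end Haar

end

theorem stmt18_general {p : ℕ} [Fact p.Prime] [MeasurableSpace ℤ_[p]] [BorelSpace ℤ_[p]]
    (μ : Measure ℤ_[p]) [μ.IsAddHaarMeasure] (hμ : μ Set.univ = 1)
    {X : Type*} [NormedAddCommGroup X] [NormedSpace ℂ X]
    (C : ℝ) (hC : 0 < C)
    (hlow : ∀ (N : ℕ), 1 ≤ N → ∀ x : ℕ → X,
      C⁻¹ * ∑ k ∈ Finset.range (p^(2*N)), ‖x k‖^2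
        ≤ ∫ t, ‖∑ k ∈ Finset.range (p^(2*N)), padicChar ((k:ℚ_[p]) * (t:ℚ_[p]) / (p:ℚ_[p])^(2*N)) • x k‖^2 ∂μ) :
    ∃ C' : ℝ, 0 < C' ∧ ∀ (N : ℕ), 1 ≤ N → ∀ x : ℕ → X,
      ∫ t, ‖∑ k ∈ Finset.range (p^(2*N)), padicChar ((k:ℚ_[p]) * (t:ℚ_[p]) / (p:ℚ_[p])^(2*N)) • x k‖^2 ∂μ
        ≤ C' * ∑ k ∈ Finset.range (p^(2*N)), ‖x k‖^2 := by
  have : IsProbabilityMeasure μ := ⟨hμ⟩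
  exact ⟨C, hC, fun N hN => integral_norm_sq_padicDFT_le_of_le_integral μ hC (2 * N) (hlow N hN)⟩

theorem stmt18 {p : ℕ} [Fact p.Prime] [MeasurableSpace ℤ_[p]] [BorelSpace ℤ_[p]]
    (μ : Measure ℤ_[p]) [μ.IsAddHaarMeasure] (hμ : μ Set.univ = 1)
    {X : Type*} [NormedAddCommGroup X] [NormedSpace ℂ X] [CompleteSpace X]
    (C : ℝ) (hC : 0 < C)
    (hlow : ∀ (N : ℕ), 1 ≤ N → ∀ x : ℕ → X,
      C⁻¹ * ∑ k ∈ Finset.range (p^(2*N)), ‖x k‖^2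
        ≤ ∫ t, ‖∑ k ∈ Finset.range (p^(2*N)), padicChar ((k:ℚ_[p]) * (t:ℚ_[p]) / (p:ℚ_[p])^(2*N)) • x k‖^2 ∂μ) :
    ∃ C' : ℝ, 0 < C' ∧ ∀ (N : ℕ), 1 ≤ N → ∀ x : ℕ → X,
      ∫ t, ‖∑ k ∈ Finset.range (p^(2*N)), padicChar ((k:ℚ_[p]) * (t:ℚ_[p]) / (p:ℚ_[p])^(2*N)) • x k‖^2 ∂μ
        ≤ C' * ∑ k ∈ Finset.range (p^(2*N)), ‖x k‖^2 :=
  stmt18_general μ hμ C hC hlow
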